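/- For q ∈ (0,1) and ν, μ with 0 < ν < μ < 1, and any θ > 0, the function x ↦ (Ψ_q''(θ+x) - Ψ_q''(θ+log_q ν))/(Ψ_q'(θ+x) - Ψ_q'(θ+log_q ν)) is strictly increasing on (0, log_q ν), given that θ ↦ Ψ_q'''(θ)/Ψ_q''(θ) is increasing, Ψ_q' is strictly decreasing, and Ψ_q'' < 0 on (0,∞). -/

import Mathlib

open Real

/-- Infinite q-Pochhammer symbol (x;q)_∞ = ∏_{j=0}^∞ (1 - x q^j). -/
noncomputable def qPochInf (x q : ℝ) : ℝ := ∏' j : ℕ, (1 - x * q ^ j)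

/-- The q-gamma function Γ_q(z) = (1-q)^{1-z} (q;q)_∞ / (q^z;q)_∞. -/
noncomputable def qGamma (q z : ℝ) : ℝ :=
  (1 - q) ^ (1 - z) * qPochInf q q / qPochInf (q ^ z) q

/-- The q-digamma function Ψ_q(Z) = d/dZ log Γ_q(Z). -/
noncomputable def qDigamma (q Z : ℝ) : ℝ := deriv (fun z => Real.log (qGamma q z)) Z

open Set Filter Topology

/-!
For `0 < q < 1` and `z > 0`, expanding `log (1 - q^z q^j)` and summing over `j` gives
`log (q^z; q)_∞ = -∑_{n ≥ 1} q^{nz} / (n (1 - q^n))`, hence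
`Ψ_q^{(k)}(z) = (log q)^{k+1} Φ_k(z)` with `Φ_m(z) = ∑_{n ≥ 1} n^m q^{nz} / (1 - q^n)`.
Cauchy–Schwarz gives `Φ_{m+1}² < Φ_m Φ_{m+2}`, so `Φ_3 / Φ_2` is strictly decreasing and
`Ψ_q''' / Ψ_q'' = log q · Φ_3 / Φ_2` strictly increasing.
For `x < y < B = log_q ν`, Cauchy's mean value theorem on `[θ+x, θ+y]` and `[θ+y, θ+B]` exhibits
`b(x)/a(x)` as a mean, with positive weights, of the values of `Ψ_q''' / Ψ_q''` at points
`c₁ < c₂`, while `b(y)/a(y)` is its value at `c₂`.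
-/

theorem strictMonoOn_div_sub_of_strictMonoOn_deriv_div {f g f' g' : ℝ → ℝ} {a b : ℝ}
    (hf : ∀ x ∈ Ioc a b, HasDerivAt f (f' x) x) (hg : ∀ x ∈ Ioc a b, HasDerivAt g (g' x) x)
    (hf' : ∀ x ∈ Ioo a b, f' x < 0) (hratio : StrictMonoOn (fun x => g' x / f' x) (Ioo a b)) :
    StrictMonoOn (fun x => (g x - g b) / (f x - f b)) (Ioo a b) := by
  have hanti : StrictAntiOn f (Ioc a b) := by
    refine strictAntiOn_of_deriv_neg (convex_Ioc a b)
      (fun x hx => (hf x hx).continuousAt.continuousWithinAt) fun x hx => ?_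
    rw [interior_Ioc] at hx
    rw [(hf x (Ioo_subset_Ioc_self hx)).deriv]
    exact hf' x hx
  have hmvt : ∀ u ∈ Ioo a b, ∀ v ∈ Ioc a b, u < v →
      ∃ c ∈ Ioo u v, g v - g u = g' c / f' c * (f v - f u) := by
    intro u hu v hv huv
    have hsub : Icc u v ⊆ Ioc a b := Icc_subset_Ioc hu.1 hv.2
    obtain ⟨c, hc, h⟩ := exists_ratio_hasDerivAt_eq_ratio_slope f f' huv
      (fun x hx => (hf x (hsub hx)).continuousAt.continuousWithinAt)
      (fun x hx => hf x (hsub (Ioo_subset_Icc_self hx))) g g'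
      (fun x hx => (hg x (hsub hx)).continuousAt.continuousWithinAt)
      (fun x hx => hg x (hsub (Ioo_subset_Icc_self hx)))
    have hfc : f' c ≠ 0 := (hf' c ⟨hu.1.trans hc.1, hc.2.trans_le hv.2⟩).ne
    refine ⟨c, hc, ?_⟩
    field_simp
    linarith
  intro x hx y hy hxy
  have hb : b ∈ Ioc a b := right_mem_Ioc.2 (hy.1.trans hy.2)
  obtain ⟨c₁, hc₁, h₁⟩ := hmvt x hx y (Ioo_subset_Ioc_self hy) hxy
  obtain ⟨c₂, hc₂, h₂⟩ := hmvt y hy b hb hy.2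
  have hr : g' c₁ / f' c₁ < g' c₂ / f' c₂ :=
    hratio ⟨hx.1.trans hc₁.1, hc₁.2.trans hy.2⟩ ⟨hy.1.trans hc₂.1, hc₂.2⟩ (hc₁.2.trans hc₂.1)
  have hfxy : 0 < f x - f y :=
    sub_pos.2 (hanti (Ioo_subset_Ioc_self hx) (Ioo_subset_Ioc_self hy) hxy)
  have hfyb : 0 < f y - f b := sub_pos.2 (hanti (Ioo_subset_Ioc_self hy) hb hy.2)
  have hgx : g x - g b = g' c₁ / f' c₁ * (f x - f y) + g' c₂ / f' c₂ * (f y - f b) := by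
    linear_combination -h₁ - h₂
  have hgy : g y - g b = g' c₂ / f' c₂ * (f y - f b) := by linear_combination -h₂
  rw [div_lt_div_iff₀ (by linarith) hfyb, hgx, hgy]
  nlinarith [mul_pos (mul_pos (sub_pos.2 hr) hfxy) hfyb]

section ExpSeries

variable {l K z : ℝ} {c : ℕ → ℝ} {m : ℕ}

lemma summable_succ_pow_mul_geometric (m : ℕ) {r : ℝ} (hr0 : 0 ≤ r) (hr1 : r < 1) :
    Summable fun n : ℕ => ((n : ℝ) + 1) ^ m * r ^ (n + 1) := by
  have h := summable_pow_mul_geometric_of_norm_lt_one m (r := r) (by rwa [norm_of_nonneg hr0])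
  exact ((summable_nat_add_iff 1).2 h).congr fun n => by push_cast; ring

lemma abs_mul_exp_succ_mul_le (hl : l < 0) (hc : ∀ n, |c n| ≤ K * ((n : ℝ) + 1) ^ m) {y : ℝ}
    (hzy : z ≤ y) (n : ℕ) :
    |c n * exp ((n + 1) * l * y)| ≤ K * (((n : ℝ) + 1) ^ m * exp (l * z) ^ (n + 1)) := by
  have hexp : exp ((n + 1) * l * y) ≤ exp (l * z) ^ (n + 1) := by
    rw [← exp_nat_mul, exp_le_exp]
    push_cast
    have hn : (0 : ℝ) ≤ n + 1 := by positivity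
    nlinarith [mul_nonneg hn (mul_nonneg (neg_nonneg.2 hl.le) (sub_nonneg.2 hzy))]
  rw [abs_mul, abs_exp, ← mul_assoc]
  exact mul_le_mul (hc n) hexp (exp_pos _).le ((abs_nonneg _).trans (hc n))

lemma summable_mul_exp_succ_mul (hl : l < 0) (hc : ∀ n, |c n| ≤ K * ((n : ℝ) + 1) ^ m)
    (hz : 0 < z) :
    Summable fun n : ℕ => c n * exp ((n + 1) * l * z) :=
  .of_norm_bounded ((summable_succ_pow_mul_geometric m (exp_pos _).le
    (exp_lt_one_iff.2 (mul_neg_of_neg_of_pos hl hz))).mul_left K)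
    (abs_mul_exp_succ_mul_le hl hc le_rfl)

lemma hasDerivAt_tsum_mul_exp_succ_mul (hl : l < 0) (hc : ∀ n, |c n| ≤ K * ((n : ℝ) + 1) ^ m)
    (hz : 0 < z) :
    HasDerivAt (fun y => ∑' n : ℕ, c n * exp ((n + 1) * l * y))
      (∑' n : ℕ, c n * ((n + 1) * l) * exp ((n + 1) * l * z)) z := by
  have hc' : ∀ n, |c n * ((n + 1) * l)| ≤ K * |l| * ((n : ℝ) + 1) ^ (m + 1) := by
    intro n
    have hn : (0 : ℝ) < n + 1 := by positivity
    rw [abs_mul, abs_mul, abs_of_pos hn, pow_succ]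
    calc |c n| * ((n + 1) * |l|) ≤ K * ((n : ℝ) + 1) ^ m * ((n + 1) * |l|) := by
          gcongr; exact hc n
      _ = _ := by ring
  have hz2 : 0 < z / 2 := by positivity
  refine hasDerivAt_tsum_of_isPreconnected (t := Ioi (z / 2)) (y₀ := z)
    (g := fun n y => c n * exp ((n + 1) * l * y))
    (g' := fun n y => c n * ((n + 1) * l) * exp ((n + 1) * l * y))
    ((summable_succ_pow_mul_geometric (m + 1) (exp_pos _).le
      (exp_lt_one_iff.2 (mul_neg_of_neg_of_pos hl hz2))).mul_left (K * |l|))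
    isOpen_Ioi (convex_Ioi _).isPreconnected (fun n y _ => ?_)
    (fun n y hy => abs_mul_exp_succ_mul_le hl hc' (le_of_lt hy) n)
    (by simp only [mem_Ioi]; linarith)
    (summable_mul_exp_succ_mul hl hc hz) (by simp only [mem_Ioi]; linarith)
  exact (((hasDerivAt_id' y).const_mul ((n + 1) * l)).exp.const_mul (c n)).congr_deriv (by ring)

end ExpSeries

/-- `qSeries q m z = ∑_{n ≥ 1} n^m q^{nz} / (1 - q^n)`; for `m = -1` this is
`-log (q^z; q)_∞`. -/
noncomputable def qSeries (q : ℝ) (m : ℤ) (z : ℝ) : ℝ :=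
  ∑' n : ℕ, ((n : ℝ) + 1) ^ m / (1 - q ^ (n + 1)) * exp ((n + 1) * log q * z)

section QSeries

variable {q z : ℝ}

lemma abs_qSeries_coeff_le (hq0 : 0 < q) (hq1 : q < 1) (m : ℤ) (n : ℕ) :
    |((n : ℝ) + 1) ^ m / (1 - q ^ (n + 1))| ≤ (1 - q)⁻¹ * ((n : ℝ) + 1) ^ m.toNat := by
  have hqn : 0 < 1 - q ^ (n + 1) := sub_pos.2 (pow_lt_one₀ hq0.le hq1 n.add_one_ne_zero)
  have hqn' : 1 - q ≤ 1 - q ^ (n + 1) := by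
    linarith [pow_le_of_le_one hq0.le hq1.le n.add_one_ne_zero]
  have hn : (1 : ℝ) ≤ n + 1 := le_add_of_nonneg_left n.cast_nonneg
  have hm : ((n : ℝ) + 1) ^ m ≤ ((n : ℝ) + 1) ^ m.toNat := by
    rw [← zpow_natCast]
    exact zpow_le_zpow_right₀ hn (Int.self_le_toNat m)
  rw [abs_of_pos (by positivity), ← div_eq_inv_mul]
  calc _ ≤ ((n : ℝ) + 1) ^ m.toNat / (1 - q ^ (n + 1)) := by gcongr
    _ ≤ _ := by gcongr

lemma qSeries_term_pos (hq0 : 0 < q) (hq1 : q < 1) (m : ℤ) (z : ℝ) (n : ℕ) :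
    0 < ((n : ℝ) + 1) ^ m / (1 - q ^ (n + 1)) * exp ((n + 1) * log q * z) := by
  have := sub_pos.2 (pow_lt_one₀ hq0.le hq1 n.add_one_ne_zero)
  positivity

lemma summable_qSeries (hq0 : 0 < q) (hq1 : q < 1) (m : ℤ) (hz : 0 < z) :
    Summable fun n : ℕ => ((n : ℝ) + 1) ^ m / (1 - q ^ (n + 1)) * exp ((n + 1) * log q * z) :=
  summable_mul_exp_succ_mul (log_neg hq0 hq1) (abs_qSeries_coeff_le hq0 hq1 m) hz

lemma qSeries_pos (hq0 : 0 < q) (hq1 : q < 1) (m : ℤ) (hz : 0 < z) : 0 < qSeries q m z :=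
  (summable_qSeries hq0 hq1 m hz).tsum_pos (fun n => (qSeries_term_pos hq0 hq1 m z n).le) 0
    (qSeries_term_pos hq0 hq1 m z 0)

lemma hasDerivAt_qSeries (hq0 : 0 < q) (hq1 : q < 1) (m : ℤ) (hz : 0 < z) :
    HasDerivAt (qSeries q m) (log q * qSeries q (m + 1) z) z := by
  refine (hasDerivAt_tsum_mul_exp_succ_mul (log_neg hq0 hq1) (abs_qSeries_coeff_le hq0 hq1 m)
    hz).congr_deriv ?_
  rw [qSeries, ← tsum_mul_left]
  refine tsum_congr fun n => ?_
  rw [zpow_add_one₀ (by positivity)]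
  ring

lemma qSeries_succ_sq_lt_mul (hq0 : 0 < q) (hq1 : q < 1) (m : ℤ) (hz : 0 < z) :
    qSeries q (m + 1) z ^ 2 < qSeries q m z * qSeries q (m + 2) z := by
  set w : ℕ → ℝ := fun n => ((n : ℝ) + 1) ^ m / (1 - q ^ (n + 1)) * exp ((n + 1) * log q * z)
  have hw : ∀ n, 0 < w n := qSeries_term_pos hq0 hq1 m z
  have hsum : ∀ j : ℕ, HasSum (fun n : ℕ => ((n : ℝ) + 1) ^ j * w n) (qSeries q (m + j) z) := by
    refine fun j => (summable_qSeries hq0 hq1 (m + j) hz).hasSum.congr_fun fun n => ?_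
    rw [zpow_add₀ (by positivity), zpow_natCast]
    ring
  -- Cauchy–Schwarz: `∑ (n - t)² n^m q^{nz} / (1 - q^n) > 0`, evaluated at `t = Φ_{m+1} / Φ_m`.
  set t := qSeries q (m + 1) z / qSeries q m z
  have hquad : HasSum (fun n : ℕ => ((n : ℝ) + 1 - t) ^ 2 * w n)
      (qSeries q (m + 2) z - 2 * t * qSeries q (m + 1) z + t ^ 2 * qSeries q m z) := by
    have h := ((hsum 2).sub ((hsum 1).mul_left (2 * t))).add ((hsum 0).mul_left (t ^ 2))
    simp only [Nat.cast_ofNat, Nat.cast_one, Nat.cast_zero, add_zero] at h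
    exact h.congr_fun fun n => by ring
  have hquad_pos :
      0 < qSeries q (m + 2) z - 2 * t * qSeries q (m + 1) z + t ^ 2 * qSeries q m z := by
    have hnn : ∀ n : ℕ, 0 ≤ ((n : ℝ) + 1 - t) ^ 2 * w n := fun n =>
      mul_nonneg (sq_nonneg _) (hw n).le
    rw [← hquad.tsum_eq]
    by_cases ht : t = 1
    · exact hquad.summable.tsum_pos hnn 1 (by have := hw 1; rw [ht]; norm_num; positivity)
    · refine hquad.summable.tsum_pos hnn 0 (mul_pos (sq_pos_of_ne_zero ?_) (hw 0))
      contrapose! ht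
      push_cast at ht
      linarith
  have hm := qSeries_pos hq0 hq1 m hz
  have hmt : t * qSeries q m z = qSeries q (m + 1) z := div_mul_cancel₀ _ hm.ne'
  nlinarith [mul_pos hm hquad_pos]

lemma strictAntiOn_qSeries_succ_div (hq0 : 0 < q) (hq1 : q < 1) (m : ℤ) :
    StrictAntiOn (fun z => qSeries q (m + 1) z / qSeries q m z) (Ioi 0) := by
  have hd : ∀ z ∈ Ioi (0 : ℝ), HasDerivAt (fun z => qSeries q (m + 1) z / qSeries q m z)
      (log q * ((qSeries q m z * qSeries q (m + 2) z - qSeries q (m + 1) z ^ 2) /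
        qSeries q m z ^ 2)) z := by
    intro z hz
    refine ((hasDerivAt_qSeries hq0 hq1 (m + 1) hz).div (hasDerivAt_qSeries hq0 hq1 m hz)
      (qSeries_pos hq0 hq1 m hz).ne').congr_deriv ?_
    rw [add_assoc, one_add_one_eq_two]
    ring
  refine strictAntiOn_of_deriv_neg (convex_Ioi 0)
    (fun z hz => (hd z hz).continuousAt.continuousWithinAt) fun z hz => ?_
  rw [interior_Ioi] at hz
  rw [(hd z hz).deriv]
  exact mul_neg_of_neg_of_pos (log_neg hq0 hq1) (div_pos
    (sub_pos.2 (qSeries_succ_sq_lt_mul hq0 hq1 m hz)) (pow_pos (qSeries_pos hq0 hq1 m hz) 2))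

lemma summable_mul_pow_succ_div_succ (hq0 : 0 < q) (hq1 : q < 1) {t : ℝ} (ht0 : 0 ≤ t)
    (ht1 : t < 1) : Summable fun p : ℕ × ℕ => (t * q ^ p.1) ^ (p.2 + 1) / (p.2 + 1) := by
  refine .of_nonneg_of_le (fun p => by positivity) (fun ⟨j, k⟩ => ?_)
    ((summable_geometric_of_lt_one hq0.le hq1).mul_of_nonneg
      (summable_geometric_of_lt_one ht0 ht1) (fun j => by positivity) (fun k => by positivity))
  calc (t * q ^ j) ^ (k + 1) / (k + 1) ≤ (t * q ^ j) ^ (k + 1) :=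
        div_le_self (by positivity) (le_add_of_nonneg_left k.cast_nonneg)
    _ = t ^ (k + 1) * (q ^ j) ^ (k + 1) := mul_pow _ _ _
    _ ≤ t ^ k * q ^ j := mul_le_mul (pow_le_pow_of_le_one ht0 ht1.le k.le_succ)
        (pow_le_of_le_one (by positivity) (pow_le_one₀ hq0.le hq1.le) k.add_one_ne_zero)
        (by positivity) (by positivity)
    _ = q ^ j * t ^ k := mul_comm _ _

lemma hasSum_log_one_sub_mul_pow (hq0 : 0 < q) (hq1 : q < 1) {t : ℝ} (ht0 : 0 ≤ t)
    (ht1 : t < 1) :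
    HasSum (fun j : ℕ => log (1 - t * q ^ j))
      (-∑' k : ℕ, t ^ (k + 1) / ((k + 1) * (1 - q ^ (k + 1)))) := by
  set F : ℕ × ℕ → ℝ := fun p => (t * q ^ p.1) ^ (p.2 + 1) / (p.2 + 1)
  have hF : HasSum F (∑' p, F p) := (summable_mul_pow_succ_div_succ hq0 hq1 ht0 ht1).hasSum
  have hlog : ∀ j : ℕ, HasSum (fun k => F (j, k)) (-log (1 - t * q ^ j)) := fun j =>
    Real.hasSum_pow_div_log_of_abs_lt_one (x := t * q ^ j) (by
      rw [abs_of_nonneg (by positivity)]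
      exact mul_lt_one_of_nonneg_of_lt_one_left ht0 ht1 (pow_le_one₀ hq0.le hq1.le))
  have hgeom : ∀ k : ℕ,
      HasSum (fun j => F (j, k)) (t ^ (k + 1) / ((k + 1) * (1 - q ^ (k + 1)))) := by
    intro k
    have hqk : q ^ (k + 1) < 1 := pow_lt_one₀ hq0.le hq1 k.add_one_ne_zero
    have h := (hasSum_geometric_of_lt_one (by positivity) hqk).mul_left (t ^ (k + 1) / (k + 1))
    rw [← div_eq_mul_inv, div_div] at h
    refine h.congr_fun fun j => ?_
    dsimp only [F]
    rw [mul_pow, ← pow_mul, ← pow_mul, mul_comm j]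
    ring
  have hswap := ((Equiv.prodComm ℕ ℕ).hasSum_iff.2 hF).prod_fiberwise hgeom
  rw [hswap.tsum_eq]
  simpa using (hF.prod_fiberwise hlog).neg

lemma qPochInf_eq_exp (hq0 : 0 < q) (hq1 : q < 1) {t : ℝ} (ht0 : 0 ≤ t) (ht1 : t < 1) :
    qPochInf t q = exp (-∑' k : ℕ, t ^ (k + 1) / ((k + 1) * (1 - q ^ (k + 1)))) := by
  have h := (hasSum_log_one_sub_mul_pow hq0 hq1 ht0 ht1).rexp
  have hpos : ∀ j : ℕ, 0 < 1 - t * q ^ j := fun j =>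
    sub_pos.2 (mul_lt_one_of_nonneg_of_lt_one_left ht0 ht1 (pow_le_one₀ hq0.le hq1.le))
  rw [show exp ∘ _ = fun j : ℕ => 1 - t * q ^ j from funext fun j => exp_log (hpos j)] at h
  exact h.tprod_eq

lemma tsum_rpow_eq_qSeries_neg_one (hq0 : 0 < q) (z : ℝ) :
    ∑' k : ℕ, (q ^ z) ^ (k + 1) / ((k + 1) * (1 - q ^ (k + 1))) = qSeries q (-1) z := by
  refine tsum_congr fun k => ?_
  rw [rpow_def_of_pos hq0, ← exp_nat_mul, zpow_neg_one]
  push_cast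
  rw [← mul_assoc]
  simp only [div_eq_mul_inv, mul_inv]
  ring

end QSeries

section QDigamma

variable {q z : ℝ}

lemma log_qGamma_eq (hq0 : 0 < q) (hq1 : q < 1) (hz : 0 < z) :
    log (qGamma q z) = (1 - z) * log (1 - q) - qSeries q (-1) 1 + qSeries q (-1) z := by
  have hq : 0 < 1 - q := sub_pos.2 hq1
  have hq' : qPochInf q q = exp (-qSeries q (-1) 1) := by
    rw [qPochInf_eq_exp hq0 hq1 hq0.le hq1, ← tsum_rpow_eq_qSeries_neg_one hq0, rpow_one]
  rw [qGamma, hq', qPochInf_eq_exp hq0 hq1 (rpow_nonneg hq0.le z) (rpow_lt_one hq0.le hq1 hz),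
    tsum_rpow_eq_qSeries_neg_one hq0, log_div (by positivity) (exp_ne_zero _),
    log_mul (by positivity) (exp_ne_zero _), log_rpow hq, log_exp, log_exp]
  ring

lemma qDigamma_eq (hq0 : 0 < q) (hq1 : q < 1) (hz : 0 < z) :
    qDigamma q z = -log (1 - q) + log q * qSeries q 0 z := by
  have hev : (fun y => log (qGamma q y)) =ᶠ[𝓝 z]
      fun y => (1 - y) * log (1 - q) - qSeries q (-1) 1 + qSeries q (-1) y :=
    eventually_of_mem (Ioi_mem_nhds hz) fun y hy => log_qGamma_eq hq0 hq1 hy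
  have hd := ((((hasDerivAt_id' z).const_sub 1).mul_const (log (1 - q))).sub_const
    (qSeries q (-1) 1)).add (hasDerivAt_qSeries hq0 hq1 (-1) hz)
  rw [qDigamma, hev.deriv_eq]
  exact hd.deriv.trans (by norm_num)

lemma hasDerivAt_iterate_deriv_qDigamma (hq0 : 0 < q) (hq1 : q < 1) (k : ℕ) (hz : 0 < z) :
    HasDerivAt (deriv^[k] (qDigamma q)) (log q ^ (k + 2) * qSeries q (k + 1) z) z := by
  induction k generalizing z with
  | zero =>
    have hev : qDigamma q =ᶠ[𝓝 z] fun y => -log (1 - q) + log q * qSeries q 0 y :=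
      eventually_of_mem (Ioi_mem_nhds hz) fun y hy => qDigamma_eq hq0 hq1 hy
    refine HasDerivAt.congr_of_eventuallyEq ?_ hev
    refine (((hasDerivAt_qSeries hq0 hq1 0 hz).const_mul (log q)).const_add
      (-log (1 - q))).congr_deriv ?_
    push_cast
    ring
  | succ k ih =>
    have hev : deriv^[k + 1] (qDigamma q) =ᶠ[𝓝 z]
        fun y => log q ^ (k + 2) * qSeries q (k + 1) y :=
      eventually_of_mem (Ioi_mem_nhds hz) fun y hy => by
        rw [Function.iterate_succ_apply', (ih hy).deriv]
    refine HasDerivAt.congr_of_eventuallyEq ?_ hev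
    refine ((hasDerivAt_qSeries hq0 hq1 (k + 1) hz).const_mul (log q ^ (k + 2))).congr_deriv ?_
    push_cast
    ring

lemma iterate_deriv_qDigamma_eq (hq0 : 0 < q) (hq1 : q < 1) (k : ℕ) (hz : 0 < z) :
    deriv^[k + 1] (qDigamma q) z = log q ^ (k + 2) * qSeries q (k + 1) z := by
  rw [Function.iterate_succ_apply']
  exact (hasDerivAt_iterate_deriv_qDigamma hq0 hq1 k hz).deriv

lemma differentiableAt_iterate_deriv_qDigamma (hq0 : 0 < q) (hq1 : q < 1) (k : ℕ) (hz : 0 < z) :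
    DifferentiableAt ℝ (deriv^[k] (qDigamma q)) z :=
  (hasDerivAt_iterate_deriv_qDigamma hq0 hq1 k hz).differentiableAt

lemma strictMonoOn_iterate_deriv_qDigamma_three_div_two (hq0 : 0 < q) (hq1 : q < 1) :
    StrictMonoOn (fun z => deriv^[3] (qDigamma q) z / deriv^[2] (qDigamma q) z) (Ioi 0) := by
  have hanti := strictAntiOn_qSeries_succ_div hq0 hq1 2
  have hlq := log_neg hq0 hq1
  have heq : EqOn (fun z => log q * (qSeries q (2 + 1) z / qSeries q 2 z))
      (fun z => deriv^[3] (qDigamma q) z / deriv^[2] (qDigamma q) z) (Ioi 0) := by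
    intro z hz
    have h2 := iterate_deriv_qDigamma_eq hq0 hq1 1 hz
    have h3 := iterate_deriv_qDigamma_eq hq0 hq1 2 hz
    norm_num at h2 h3 ⊢
    rw [h2, h3]
    field_simp [(qSeries_pos hq0 hq1 2 hz).ne', hlq.ne]
  exact StrictMonoOn.congr (fun x hx y hy hxy => mul_lt_mul_of_neg_left (hanti hx hy hxy) hlq) heq

end QDigamma

theorem stmt_18_general (q ν μ θ : ℝ) (hq0 : 0 < q) (hq1 : q < 1) (hν0 : 0 < ν) (hνμ : ν < μ)
    (hμ1 : μ < 1) (hθ : 0 < θ)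
    (hneg : ∀ z ∈ Set.Ioi (0 : ℝ), deriv (deriv (qDigamma q)) z < 0) :
    StrictMonoOn
      (fun x =>
        (deriv (deriv (qDigamma q)) (θ + x)
          - deriv (deriv (qDigamma q)) (θ + Real.log ν / Real.log q)) /
        (deriv (qDigamma q) (θ + x)
          - deriv (qDigamma q) (θ + Real.log ν / Real.log q)))
      (Set.Ioo (0 : ℝ) (Real.log ν / Real.log q)) := by
  set L := log ν / log q
  have hL : 0 < L := div_pos_of_neg_of_neg (log_neg hν0 (hνμ.trans hμ1)) (log_neg hq0 hq1)
  have hpos : ∀ x ∈ Ioc θ (θ + L), 0 < x := fun x hx => hθ.trans hx.1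
  have key := strictMonoOn_div_sub_of_strictMonoOn_deriv_div
    (f := deriv (qDigamma q)) (g := deriv (deriv (qDigamma q)))
    (fun x hx => (differentiableAt_iterate_deriv_qDigamma hq0 hq1 1 (hpos x hx)).hasDerivAt)
    (fun x hx => (differentiableAt_iterate_deriv_qDigamma hq0 hq1 2 (hpos x hx)).hasDerivAt)
    (fun x hx => hneg x (hpos x (Ioo_subset_Ioc_self hx)))
    ((strictMonoOn_iterate_deriv_qDigamma_three_div_two hq0 hq1).mono
      fun x hx => hpos x (Ioo_subset_Ioc_self hx))
  exact key.comp (fun x _ y _ hxy => (add_lt_add_iff_left θ).2 hxy)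
    fun x hx => ⟨by linarith [hx.1], by linarith [hx.2]⟩

/-- With Ψ₁ = Ψ_q', Ψ₂ = Ψ_q'', Ψ₃ = Ψ_q''', and given that z ↦ Ψ₃(z)/Ψ₂(z) is
increasing, Ψ₁ is strictly decreasing, and Ψ₂ < 0 on (0,∞), the function
x ↦ (Ψ₂(θ+x) - Ψ₂(θ+log_q ν))/(Ψ₁(θ+x) - Ψ₁(θ+log_q ν)) is strictly increasing
on (0, log_q ν). -/
theorem stmt_18 (q ν μ θ : ℝ) (hq0 : 0 < q) (hq1 : q < 1) (hν0 : 0 < ν) (hνμ : ν < μ)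
    (hμ1 : μ < 1) (hθ : 0 < θ)
    (hratio : MonotoneOn
      (fun z => deriv (deriv (deriv (qDigamma q))) z / deriv (deriv (qDigamma q)) z)
      (Set.Ioi (0 : ℝ)))
    (hanti : StrictAntiOn (deriv (qDigamma q)) (Set.Ioi (0 : ℝ)))
    (hneg : ∀ z ∈ Set.Ioi (0 : ℝ), deriv (deriv (qDigamma q)) z < 0) :
    StrictMonoOn
      (fun x =>
        (deriv (deriv (qDigamma q)) (θ + x)
          - deriv (deriv (qDigamma q)) (θ + Real.log ν / Real.log q)) /
        (deriv (qDigamma q) (θ + x)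
          - deriv (qDigamma q) (θ + Real.log ν / Real.log q)))
      (Set.Ioo (0 : ℝ) (Real.log ν / Real.log q)) :=
  stmt_18_general q ν μ θ hq0 hq1 hν0 hνμ hμ1 hθ hneg
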